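/- Let G be a caterpillar tree of diameter 2n − 1 (n ≥ 4) with central path x_1,…,x_{2n−2}, containing no induced P_n + P_n. Then neither x_{n−2} nor x_{n+1} has any leaf neighbors. -/

import Mathlib

open MvPolynomial

/-- The `n`-path ideal of a graph `G`: the ideal generated by the products of the
vertices along each path on `n` vertices of `G`. -/
noncomputable def pathIdeal {V : Type*} (K : Type*) [Field K] (G : SimpleGraph V) (n : ℕ) :
    Ideal (MvPolynomial V K) :=
  Ideal.span {f | ∃ p : Fin n → V, Function.Injective p ∧
    (∀ i j : Fin n, (j : ℕ) = (i : ℕ) + 1 → G.Adj (p i) (p j)) ∧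
    f = ∏ i, (X (p i) : MvPolynomial V K)}

/-- `G` contains a copy of `H` as an induced subgraph. -/
def ContainsInduced {V W : Type*} (G : SimpleGraph V) (H : SimpleGraph W) : Prop :=
  Nonempty (H ↪g G)

/-- `P_n + P_n` : the disjoint union of two path graphs on `n` vertices each. -/
def twoPaths (n : ℕ) : SimpleGraph (Fin n ⊕ Fin n) :=
  SimpleGraph.pathGraph n ⊕g SimpleGraph.pathGraph n

/-- The tree `L_{n,m}`: a path `x_1, …, x_n` together with a path `y_1, …, y_{m-1}`
attached to `x_m` at its end `y_{m-1}`.  Vertex `i` for `i < n` is `x_{i+1}`, and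
vertex `n + j` for `j < m - 1` is `y_{j+1}`. -/
def Lgraph (n m : ℕ) : SimpleGraph (Fin (n + (m - 1))) :=
  SimpleGraph.fromRel (fun a b =>
    ((b : ℕ) = (a : ℕ) + 1 ∧ ((b : ℕ) ≤ n - 1 ∨ n ≤ (a : ℕ))) ∨
    ((a : ℕ) = n + m - 2 ∧ (b : ℕ) = m - 1))

/-- `d` is the length of a longest path in `G` (for a tree, its diameter). -/
def IsLongestPathLength {V : Type*} (G : SimpleGraph V) (d : ℕ) : Prop :=
  (∃ (u v : V) (p : G.Walk u v), p.IsPath ∧ p.length = d) ∧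
    ∀ (u v : V) (p : G.Walk u v), p.IsPath → p.length ≤ d

/-- A vertex is a leaf if it has exactly one neighbour. -/
def IsLeafVertex {V : Type*} (G : SimpleGraph V) (v : V) : Prop :=
  (G.neighborSet v).ncard = 1

/-- `y` is a leaf neighbour of `v`: a leaf vertex adjacent to `v`. -/
def IsLeafNbr {V : Type*} (G : SimpleGraph V) (v y : V) : Prop :=
  G.Adj v y ∧ IsLeafVertex G y

/-- `G` is a caterpillar tree with central path `x 1, x 2, …, x m`: the vertices of
degree at least `2` are exactly `x 1, …, x m`, and they form a path. -/
def IsCaterpillarWithCentralPath {V : Type*} (G : SimpleGraph V) (m : ℕ) (x : ℕ → V) : Prop :=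
  G.IsTree ∧ Set.InjOn x (Set.Icc 1 m) ∧
    (∀ i : ℕ, 1 ≤ i → i + 1 ≤ m → G.Adj (x i) (x (i + 1))) ∧
    {v : V | 2 ≤ (G.neighborSet v).ncard} = x '' Set.Icc 1 m

/-- `G` is a caterpillar tree: a tree whose vertices of degree at least `2` form a path. -/
def IsCaterpillar {V : Type*} (G : SimpleGraph V) : Prop :=
  ∃ (m : ℕ) (x : ℕ → V), IsCaterpillarWithCentralPath G m x

/-!
Let `v` be a leaf neighbour of `x (n-2)`. Since `x 1` and `x (2n-2)` have degree at least two, the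
central path extends by a pendant vertex at each end to a path `w, x 1, …, x (2n-2), w'` on `2n`
vertices. In a forest every non-backtracking walk is a path and every path is induced, because an
extra edge or a repeated vertex would produce a walk around a bridge. Hence `w, x 1, …, x (n-2), v`
and `x n, …, x (2n-2), w'` are induced paths on `n` vertices, disjoint and with no edge between them.
Reversing the central path turns `x (n+1)` into `x (n-2)`.
-/

namespace SimpleGraph

variable {V : Type*} {G : SimpleGraph V} {y : ℕ → V} {a b : ℕ}

theorem reachable_of_adj_succ {i j : ℕ} (hij : i ≤ j)
    (h : ∀ k, i ≤ k → k < j → G.Adj (y k) (y (k + 1))) : G.Reachable (y i) (y j) := by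
  induction j, hij using Nat.le_induction with
  | base => rfl
  | succ j hij ih =>
    exact (ih fun k hik hkj => h k hik (by omega)).trans (h j hij (by omega)).reachable

theorem IsAcyclic.injOn_of_adj_succ (hG : G.IsAcyclic)
    (hadj : ∀ k, a ≤ k → k < b → G.Adj (y k) (y (k + 1)))
    (hback : ∀ k, a ≤ k → k + 2 ≤ b → y k ≠ y (k + 2)) : Set.InjOn y (Set.Icc a b) := by
  suffices key : ∀ i j, a ≤ i → i < j → j ≤ b → y i ≠ y j by
    rintro i ⟨hai, hib⟩ j ⟨haj, hjb⟩ hij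
    by_contra hne
    rcases Nat.lt_or_gt_of_ne hne with h | h
    · exact key i j hai h hjb hij
    · exact key j i haj h hib hij.symm
  intro i j
  induction hd : j - i using Nat.strong_induction_on generalizing i j with
  | _ d ih =>
  intro hai hij hjb heq
  obtain rfl | rfl | hd3 : j = i + 1 ∨ j = i + 2 ∨ i + 3 ≤ j := by omega
  · exact (hadj i hai (by omega)).ne heq
  · exact hback i hai hjb heq
  · -- the walk `y (i+1), …, y j = y i` avoids the edge `s(y i, y (i+1))`, which is a bridge
    have hbridge := isAcyclic_iff_forall_adj_isBridge.mp hG (hadj i hai (by omega))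
    suffices h : (G.deleteEdges {s(y i, y (i + 1))}).Reachable (y (i + 1)) (y j) from
      isBridge_iff.mp hbridge (h.trans (by rw [heq])).symm
    refine reachable_of_adj_succ (by omega) fun k hk hkj =>
      deleteEdges_adj.mpr ⟨hadj k (by omega) (by omega), ?_⟩
    rw [Set.mem_singleton_iff, Sym2.eq_iff]
    rintro (⟨hki, -⟩ | ⟨hki, hk1⟩)
    · exact ih (k - i) (by omega) i k rfl hai (by omega) (by omega) hki.symm
    · rcases Nat.eq_or_lt_of_le hk with rfl | hk
      · exact hback i hai (by omega) hk1.symm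
      · exact ih (k - (i + 1)) (by omega) (i + 1) k rfl (by omega) hk (by omega) hki.symm

theorem IsAcyclic.adj_iff_of_injOn (hG : G.IsAcyclic) (hinj : Set.InjOn y (Set.Icc a b))
    (hadj : ∀ k, a ≤ k → k < b → G.Adj (y k) (y (k + 1))) {i j : ℕ}
    (hi : i ∈ Set.Icc a b) (hj : j ∈ Set.Icc a b) :
    G.Adj (y i) (y j) ↔ i + 1 = j ∨ j + 1 = i := by
  have hfar : ∀ i j, a ≤ i → i + 2 ≤ j → j ≤ b → ¬ G.Adj (y i) (y j) := by
    intro i j hai hij hjb hadj_ij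
    refine isBridge_iff.mp (isAcyclic_iff_forall_adj_isBridge.mp hG hadj_ij) ?_
    refine reachable_of_adj_succ (by omega) fun k hk hkj =>
      deleteEdges_adj.mpr ⟨hadj k (by omega) (by omega), ?_⟩
    have hmem : ∀ l, i ≤ l → l ≤ j → l ∈ Set.Icc a b := fun l h1 h2 => ⟨by omega, by omega⟩
    rw [Set.mem_singleton_iff, Sym2.eq_iff]
    rintro (⟨hki, hk1⟩ | ⟨hkj, -⟩)
    · have := hinj (hmem k hk (by omega)) (hmem i le_rfl (by omega)) hki
      have := hinj (hmem _ (by omega) (by omega)) (hmem _ (by omega) le_rfl) hk1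
      omega
    · have := hinj (hmem _ (by omega) (by omega)) (hmem _ (by omega) le_rfl) hkj
      omega
  obtain ⟨hai, hib⟩ := hi
  obtain ⟨haj, hjb⟩ := hj
  constructor
  · intro h
    by_contra hne
    obtain rfl | hij | hji : i = j ∨ i + 2 ≤ j ∨ j + 2 ≤ i := by omega
    · exact G.irrefl h
    · exact hfar i j hai hij hjb h
    · exact hfar j i haj hji hib h.symm
  · rintro (rfl | rfl)
    · exact hadj i hai (by omega)
    · exact (hadj j haj (by omega)).symm

theorem ne_of_forall_adj_eq {v : V} {c k : ℕ} (hinj : Set.InjOn y (Set.Icc 0 b))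
    (hadj : ∀ k < b, G.Adj (y k) (y (k + 1))) (hv : ∀ u, G.Adj v u → u = y c) (hc : c ≤ b)
    (hk1 : 1 ≤ k) (hkb : k ≤ b) (hkc : k ≠ c + 1) : v ≠ y k := by
  rintro rfl
  have hprev : G.Adj (y k) (y (k - 1)) := by
    simpa [Nat.sub_add_cancel hk1] using (hadj (k - 1) (by omega)).symm
  have := hinj ⟨Nat.zero_le _, by omega⟩ ⟨Nat.zero_le _, hc⟩ (hv _ hprev)
  omega

theorem containsInduced_twoPaths {n : ℕ} {p q : ℕ → V}
    (hp : Set.InjOn p (Set.Iio n)) (hq : Set.InjOn q (Set.Iio n))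
    (hpadj : ∀ i < n, ∀ j < n, G.Adj (p i) (p j) ↔ i + 1 = j ∨ j + 1 = i)
    (hqadj : ∀ i < n, ∀ j < n, G.Adj (q i) (q j) ↔ i + 1 = j ∨ j + 1 = i)
    (hpq : ∀ i < n, ∀ j < n, p i ≠ q j ∧ ¬ G.Adj (p i) (q j)) :
    ContainsInduced G (twoPaths n) := by
  refine ⟨⟨⟨Sum.elim (fun i : Fin n => p i) (fun j : Fin n => q j), ?_⟩, ?_⟩⟩
  · rintro (i | i) (j | j) h
    · exact congrArg Sum.inl (Fin.ext (hp i.2 j.2 h))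
    · exact absurd h (hpq i i.2 j j.2).1
    · exact absurd h.symm (hpq j j.2 i i.2).1
    · exact congrArg Sum.inr (Fin.ext (hq i.2 j.2 h))
  · rintro (i | i) (j | j)
    · exact (hpadj i i.2 j j.2).trans (by simp [twoPaths, pathGraph_adj])
    · exact iff_of_false (hpq i i.2 j j.2).2 (by simp [twoPaths])
    · exact iff_of_false (fun h => (hpq j j.2 i i.2).2 h.symm) (by simp [twoPaths])
    · exact (hqadj i i.2 j j.2).trans (by simp [twoPaths, pathGraph_adj])

theorem IsAcyclic.containsInduced_twoPaths_of_pendant {n : ℕ} (hG : G.IsAcyclic) (hn : 4 ≤ n)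
    (hinj : Set.InjOn y (Set.Icc 0 (2 * n - 1)))
    (hadj : ∀ k < 2 * n - 1, G.Adj (y k) (y (k + 1)))
    {v : V} (hyv : G.Adj (y (n - 2)) v) (hv : ∀ u, G.Adj v u → u = y (n - 2)) :
    ContainsInduced G (twoPaths n) := by
  have hmem : ∀ {k}, k ≤ 2 * n - 1 → k ∈ Set.Icc 0 (2 * n - 1) := fun hk => ⟨Nat.zero_le _, hk⟩
  have hyadj : ∀ {i j}, i ≤ 2 * n - 1 → j ≤ 2 * n - 1 →
      (G.Adj (y i) (y j) ↔ i + 1 = j ∨ j + 1 = i) := fun hi hj =>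
    hG.adj_iff_of_injOn hinj (fun k _ hk => hadj k hk) (hmem hi) (hmem hj)
  have hvy : ∀ k, 1 ≤ k → k ≤ 2 * n - 1 → k ≠ n - 1 → v ≠ y k := fun k hk1 hk2 hkn =>
    ne_of_forall_adj_eq hinj hadj hv (by omega) hk1 hk2 (by omega)
  set p : ℕ → V := fun i => if i < n - 1 then y i else v with hp
  have hpadj_succ : ∀ k, 0 ≤ k → k < n - 1 → G.Adj (p k) (p (k + 1)) := by
    intro k _ hk
    by_cases hk' : k + 1 < n - 1
    · simpa [hp, hk', show k < n - 1 by omega] using hadj k (by omega)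
    · rw [show k = n - 2 by omega]
      simpa [hp, show n - 2 < n - 1 by omega, show ¬ (n - 2 + 1 < n - 1) by omega] using hyv
  have hpinj : Set.InjOn p (Set.Icc 0 (n - 1)) := by
    refine hG.injOn_of_adj_succ hpadj_succ fun k _ hk => ?_
    by_cases hk' : k + 2 < n - 1
    · simp only [hp, hk', show k < n - 1 by omega, if_true]
      exact fun h => by have := hinj (hmem (by omega)) (hmem (by omega)) h; omega
    · simp only [hp, hk', show k < n - 1 by omega, if_true, if_false]
      exact (hvy k (by omega) (by omega) (by omega)).symm
  have hpinj' : Set.InjOn p (Set.Iio n) :=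
    hpinj.mono fun i hi => Set.mem_Icc.mpr ⟨Nat.zero_le _, by rw [Set.mem_Iio] at hi; omega⟩
  refine containsInduced_twoPaths (p := p) (q := fun i => y (n + i)) hpinj'
    (fun i (hi : i < n) j (hj : j < n) h => by
      have := hinj (hmem (by omega)) (hmem (by omega)) h; omega)
    (fun i hi j hj => hG.adj_iff_of_injOn hpinj hpadj_succ ⟨Nat.zero_le _, by omega⟩
      ⟨Nat.zero_le _, by omega⟩)
    (fun i hi j hj => (hyadj (by omega) (by omega)).trans (by omega))
    fun i hi j hj => ?_
  by_cases hi' : i < n - 1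
  · simp only [hp, hi', if_true]
    refine ⟨fun h => ?_, fun h => ?_⟩
    · have := hinj (hmem (by omega)) (hmem (by omega)) h; omega
    · have := (hyadj (by omega) (by omega)).mp h; omega
  · simp only [hp, hi', if_false]
    refine ⟨hvy (n + j) (by omega) (by omega) (by omega), fun h => ?_⟩
    have := hinj (hmem (by omega)) (hmem (by omega)) (hv _ h)
    omega

end SimpleGraph

theorem IsLeafNbr.eq_of_adj {V : Type*} {G : SimpleGraph V} {w v u : V} (hv : IsLeafNbr G w v)
    (hu : G.Adj v u) : u = w := by
  obtain ⟨a, ha⟩ := Set.ncard_eq_one.mp hv.2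
  have hw : w ∈ G.neighborSet v := hv.1.symm
  have hu' : u ∈ G.neighborSet v := hu
  rw [ha, Set.mem_singleton_iff] at hw hu'
  rw [hu', hw]

namespace IsCaterpillarWithCentralPath

variable {V : Type*} {G : SimpleGraph V} {m : ℕ} {x : ℕ → V}

theorem reverse (hcat : IsCaterpillarWithCentralPath G m x) :
    IsCaterpillarWithCentralPath G m (fun i => x (m + 1 - i)) := by
  obtain ⟨htree, hinj, hadj, hdeg⟩ := hcat
  refine ⟨htree, ?_, fun i hi1 him => ?_, ?_⟩
  · rintro i ⟨hi1, him⟩ j ⟨hj1, hjm⟩ hij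
    have := hinj ⟨by omega, by omega⟩ ⟨by omega, by omega⟩ hij
    omega
  · have := (hadj (m - i) (by omega) (by omega)).symm
    rwa [show m - i + 1 = m + 1 - i by omega, show m - i = m + 1 - (i + 1) by omega] at this
  · rw [hdeg]
    ext u
    constructor
    · rintro ⟨k, ⟨hk1, hkm⟩, rfl⟩
      exact ⟨m + 1 - k, ⟨by omega, by omega⟩, by simp only [show m + 1 - (m + 1 - k) = k by omega]⟩
    · rintro ⟨k, ⟨hk1, hkm⟩, rfl⟩
      exact ⟨m + 1 - k, ⟨by omega, by omega⟩, rfl⟩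

theorem exists_pendant_extension (hcat : IsCaterpillarWithCentralPath G m x) (hm : 2 ≤ m) :
    ∃ y : ℕ → V, Set.EqOn y x (Set.Icc 1 m) ∧ Set.InjOn y (Set.Icc 0 (m + 1)) ∧
      ∀ k < m + 1, G.Adj (y k) (y (k + 1)) := by
  obtain ⟨htree, hinj, hadj, hdeg⟩ := hcat
  have hdeg2 : ∀ l ∈ Set.Icc 1 m, 1 < (G.neighborSet (x l)).ncard := fun l hl =>
    (show x l ∈ {v | 2 ≤ (G.neighborSet v).ncard} from hdeg ▸ Set.mem_image_of_mem x hl)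
  obtain ⟨w, hw, hw2⟩ := Set.exists_ne_of_one_lt_ncard (hdeg2 1 ⟨le_rfl, by omega⟩) (x 2)
  obtain ⟨w', hw', hw'm⟩ := Set.exists_ne_of_one_lt_ncard (hdeg2 m ⟨by omega, le_rfl⟩) (x (m - 1))
  set y : ℕ → V := fun i => if i = 0 then w else if i = m + 1 then w' else x i with hy
  have hyx : Set.EqOn y x (Set.Icc 1 m) := fun i ⟨hi1, him⟩ => by
    simp only [hy, show i ≠ 0 by omega, show i ≠ m + 1 by omega, if_false]
  have hyadj : ∀ k < m + 1, G.Adj (y k) (y (k + 1)) := by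
    intro k hk
    obtain rfl | hk0 := Nat.eq_zero_or_pos k
    · simpa [hy, show m ≠ 0 by omega] using (show G.Adj (x 1) w from hw).symm
    obtain rfl | hkm := eq_or_ne k m
    · simpa [hy, show k ≠ 0 by omega] using (show G.Adj (x k) w' from hw')
    · rw [hyx ⟨by omega, by omega⟩, hyx ⟨by omega, by omega⟩]
      exact hadj k hk0 (by omega)
  refine ⟨y, hyx, htree.isAcyclic.injOn_of_adj_succ (fun k _ hk => hyadj k hk) fun k _ hk => ?_,
    hyadj⟩
  obtain rfl | hk0 := Nat.eq_zero_or_pos k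
  · simpa [hy, show 2 ≠ m + 1 by omega] using hw2
  obtain hkm | hkm := eq_or_ne (k + 2) (m + 1)
  · rw [hyx ⟨by omega, by omega⟩, show y (k + 2) = w' by simp [hy, hkm], show k = m - 1 by omega]
    exact hw'm.symm
  · rw [hyx ⟨by omega, by omega⟩, hyx ⟨by omega, by omega⟩]
    exact fun h => by have := hinj ⟨by omega, by omega⟩ ⟨by omega, by omega⟩ h; omega

theorem containsInduced_twoPaths_of_isLeafNbr {n : ℕ}
    (hcat : IsCaterpillarWithCentralPath G (2 * n - 2) x) (hn : 4 ≤ n) {v : V}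
    (hv : IsLeafNbr G (x (n - 2)) v) : ContainsInduced G (twoPaths n) := by
  obtain ⟨y, hyx, hinj, hadj⟩ := hcat.exists_pendant_extension (by omega)
  rw [show 2 * n - 2 + 1 = 2 * n - 1 by omega] at hinj hadj
  have hyv : y (n - 2) = x (n - 2) := hyx ⟨by omega, by omega⟩
  exact hcat.1.isAcyclic.containsInduced_twoPaths_of_pendant hn hinj hadj (hyv ▸ hv.1)
    fun u hu => hyv ▸ hv.eq_of_adj hu

end IsCaterpillarWithCentralPath

theorem caterpillar_diam_odd_leaf_free_general {V : Type*} (G : SimpleGraph V) (n : ℕ)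
    (hn : 4 ≤ n) (x : ℕ → V) (hcat : IsCaterpillarWithCentralPath G (2 * n - 2) x)
    (hP : ¬ ContainsInduced G (twoPaths n)) :
    (∀ v : V, ¬ IsLeafNbr G (x (n - 2)) v) ∧ (∀ v : V, ¬ IsLeafNbr G (x (n + 1)) v) := by
  refine ⟨fun v hv => hP (hcat.containsInduced_twoPaths_of_isLeafNbr hn hv), fun v hv => hP ?_⟩
  refine hcat.reverse.containsInduced_twoPaths_of_isLeafNbr hn (v := v) ?_
  rwa [show 2 * n - 2 + 1 - (n - 2) = n + 1 by omega]

/-- Let `G` be a caterpillar tree of diameter `2n - 1` (`n ≥ 4`) with central path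
`x 1, …, x (2n-2)`, containing no induced `P_n + P_n`.  Then neither `x (n-2)` nor
`x (n+1)` has any leaf neighbour. -/
theorem caterpillar_diam_odd_leaf_free {V : Type*} (G : SimpleGraph V) (n : ℕ)
    (hn : 4 ≤ n) (x : ℕ → V) (hcat : IsCaterpillarWithCentralPath G (2 * n - 2) x)
    (hd : IsLongestPathLength G (2 * n - 1))
    (hP : ¬ ContainsInduced G (twoPaths n)) :
    (∀ v : V, ¬ IsLeafNbr G (x (n - 2)) v) ∧ (∀ v : V, ¬ IsLeafNbr G (x (n + 1)) v) :=
  caterpillar_diam_odd_leaf_free_general G n hn x hcat hP
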